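/- arXiv:2509.02497 — 2 statements merged into one kernel-verified Lean document; each statement's English description precedes it below -/
import Mathlib

section
/- Let f be a Fréchet differentiable pseudolinear function on an open convex set S in a real Banach space E. Then for all x, y in S: ⟨∇f(x), y − x⟩ = 0 if and only if f(y) = f(x). -/
def Pseudoconvex {E : Type*} [NormedAddCommGroup E] [NormedSpace ℝ E]
    (S : Set E) (f : E → ℝ) (f' : E → E →L[ℝ] ℝ) : Prop :=
  ∀ x ∈ S, ∀ y ∈ S, f y < f x → f' x (y - x) < 0

def Pseudolinear {E : Type*} [NormedAddCommGroup E] [NormedSpace ℝ E]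
    (S : Set E) (f : E → ℝ) (f' : E → E →L[ℝ] ℝ) : Prop :=
  Pseudoconvex S f f' ∧ Pseudoconvex S (fun x => -f x) (fun x => -(f' x))

open Filter Topology

section

variable {E : Type*} [NormedAddCommGroup E] [NormedSpace ℝ E]

lemma HasFDerivAt.eventually_lt_add_smul {f : E → ℝ} {f' : E →L[ℝ] ℝ} {x v : E}
    (hf : HasFDerivAt f f' x) (hv : 0 < f' v) :
    ∀ᶠ t in 𝓝[>] (0 : ℝ), f x < f (x + t • v) := by
  have hline : HasDerivAt (fun t : ℝ => f (x + t • v)) (f' v) 0 := by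
    have hγ : HasDerivAt (fun t : ℝ => x + t • v) v 0 := by
      simpa using ((hasDerivAt_id (0 : ℝ)).smul_const v).const_add x
    exact (by simpa using hf : HasFDerivAt f f' (x + (0 : ℝ) • v)).comp_hasDerivAt 0 hγ
  have hslope := hline.tendsto_slope_zero_right
  filter_upwards [hslope.eventually (eventually_gt_nhds hv), self_mem_nhdsWithin]
    with t hpos (ht : 0 < t)
  simp only [zero_add, zero_smul, add_zero, smul_eq_mul] at hpos
  nlinarith [(pos_iff_pos_of_mul_pos hpos).mp (inv_pos.mpr ht)]

lemma Pseudoconvex.apply_sub_nonpos_of_le {S : Set E} {f : E → ℝ} {f' : E → E →L[ℝ] ℝ}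
    (hpc : Pseudoconvex S f f') (hSc : Convex ℝ S)
    {x y : E} (hx : x ∈ S) (hy : y ∈ S) (hfx : HasFDerivAt f (f' x) x) (hle : f y ≤ f x) :
    f' x (y - x) ≤ 0 := by
  rcases hle.lt_or_eq with hlt | heq
  · exact (hpc x hx y hy hlt).le
  by_contra! hpos
  -- Just past `x` on the segment `[x, y]` there is a point `z` with `f z > f x = f y`;
  -- pseudoconvexity at `z` then makes `f' z` negative in both directions `x - z` and `y - z`.
  obtain ⟨t, hfz, ht0, ht1⟩ := ((hfx.eventually_lt_add_smul hpos).and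
    (Ioo_mem_nhdsGT (zero_lt_one' ℝ))).exists
  set z := x + t • (y - x) with hz
  have hzS : z ∈ S := by
    convert hSc hx hy (sub_nonneg.mpr ht1.le) ht0.le (sub_add_cancel 1 t) using 1
    simp only [hz]; module
  have htoy := hpc z hzS y hy (heq ▸ hfz)
  have htox := hpc z hzS x hx hfz
  rw [show y - z = (1 - t) • (y - x) by simp only [hz]; module, map_smul, smul_eq_mul] at htoy
  rw [show x - z = (-t) • (y - x) by simp only [hz]; module, map_smul, smul_eq_mul] at htox
  nlinarith

lemma Pseudolinear.apply_sub_eq_zero_of_eq {S : Set E} {f : E → ℝ} {f' : E → E →L[ℝ] ℝ}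
    (hpl : Pseudolinear S f f') (hSc : Convex ℝ S)
    {x y : E} (hx : x ∈ S) (hy : y ∈ S) (hfx : HasFDerivAt f (f' x) x)
    (heq : f y = f x) : f' x (y - x) = 0 := by
  have hle := hpl.1.apply_sub_nonpos_of_le hSc hx hy hfx heq.le
  have hge := hpl.2.apply_sub_nonpos_of_le hSc hx hy hfx.neg (neg_le_neg heq.ge)
  simp only [neg_apply, neg_nonpos] at hge
  exact le_antisymm hle hge

lemma Pseudolinear.eq_of_apply_sub_eq_zero {S : Set E} {f : E → ℝ} {f' : E → E →L[ℝ] ℝ}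
    (hpl : Pseudolinear S f f')
    {x y : E} (hx : x ∈ S) (hy : y ∈ S) (hzero : f' x (y - x) = 0) : f y = f x := by
  by_contra hne
  rcases lt_or_gt_of_ne hne with hlt | hgt
  · exact (hpl.1 x hx y hy hlt).ne hzero
  · have h := hpl.2 x hx y hy (neg_lt_neg hgt)
    simp only [neg_apply, hzero, neg_zero, lt_irrefl] at h

end

theorem stmt_2_general {E : Type*} [NormedAddCommGroup E] [NormedSpace ℝ E]
    {S : Set E} (hSc : Convex ℝ S)
    (f : E → ℝ) (f' : E → E →L[ℝ] ℝ)
    (hdiff : ∀ x ∈ S, HasFDerivAt f (f' x) x)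
    (hpl : Pseudolinear S f f') :
    ∀ x ∈ S, ∀ y ∈ S, (f' x (y - x) = 0 ↔ f y = f x) :=
  fun x hx y hy => ⟨hpl.eq_of_apply_sub_eq_zero hx hy,
    hpl.apply_sub_eq_zero_of_eq hSc hx hy (hdiff x hx)⟩

theorem stmt_2 {E : Type*} [NormedAddCommGroup E] [NormedSpace ℝ E] [CompleteSpace E]
    {S : Set E} (hSo : IsOpen S) (hSc : Convex ℝ S)
    (f : E → ℝ) (f' : E → E →L[ℝ] ℝ)
    (hdiff : ∀ x ∈ S, HasFDerivAt f (f' x) x)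
    (hpl : Pseudolinear S f f') :
    ∀ x ∈ S, ∀ y ∈ S, (f' x (y - x) = 0 ↔ f y = f x) :=
  stmt_2_general hSc f f' hdiff hpl
end

section
/- Let S be an open convex set in a real Banach space E and let f : S → ℝ be Fréchet differentiable and semistrictly quasiconvex. Then for all x, y ∈ S with f(y) < f(x), it holds that ⟨∇f(x), y − x⟩ ≤ 0. -/
/-!
Along the segment from `x` to a point `y` with `f y < f x`, semistrict quasiconvexity forces
`f < f x` everywhere except at `x` itself, so `x` maximizes `f` on that segment. Since `y - x`
lies in the positive tangent cone of the segment at `x`, Fermat's rule for constrained maxima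
gives `f' x (y - x) ≤ 0`.
-/

def SemistrictlyQuasiconvex {E : Type*} [NormedAddCommGroup E] [NormedSpace ℝ E]
    (S : Set E) (f : E → ℝ) : Prop :=
  ∀ x ∈ S, ∀ y ∈ S, ∀ l ∈ Set.Ioo (0:ℝ) 1,
    f y < f x → f (x + l • (y - x)) < f x

open Set

theorem SemistrictlyQuasiconvex.isMaxOn_segment {E : Type*} [NormedAddCommGroup E]
    [NormedSpace ℝ E] {S : Set E} {f : E → ℝ} (hf : SemistrictlyQuasiconvex S f)
    {x y : E} (hx : x ∈ S) (hy : y ∈ S) (hxy : f y < f x) :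
    IsMaxOn f (segment ℝ x y) x := by
  rw [segment_eq_image']
  rintro _ ⟨t, ⟨ht₀, ht₁⟩, rfl⟩
  show f (x + t • (y - x)) ≤ f x
  rcases ht₀.eq_or_lt with rfl | ht₀
  · simp
  rcases ht₁.eq_or_lt with rfl | ht₁
  · simpa using hxy.le
  exact (hf x hx y hy t ⟨ht₀, ht₁⟩ hxy).le

theorem stmt_12_general {E : Type*} [NormedAddCommGroup E] [NormedSpace ℝ E]
    {S : Set E}
    (f : E → ℝ) (f' : E → E →L[ℝ] ℝ)
    (hdiff : ∀ x ∈ S, HasFDerivAt f (f' x) x)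
    (hssq : SemistrictlyQuasiconvex S f) :
    ∀ x ∈ S, ∀ y ∈ S, f y < f x → f' x (y - x) ≤ 0 := by
  intro x hx y hy hxy
  exact (hssq.isMaxOn_segment hx hy hxy).localize.hasFDerivWithinAt_nonpos
      (hdiff x hx).hasFDerivWithinAt (sub_mem_posTangentConeAt_of_segment_subset subset_rfl)

theorem stmt_12 {E : Type*} [NormedAddCommGroup E] [NormedSpace ℝ E] [CompleteSpace E]
    {S : Set E} (hSo : IsOpen S) (hSc : Convex ℝ S)
    (f : E → ℝ) (f' : E → E →L[ℝ] ℝ)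
    (hdiff : ∀ x ∈ S, HasFDerivAt f (f' x) x)
    (hssq : SemistrictlyQuasiconvex S f) :
    ∀ x ∈ S, ∀ y ∈ S, f y < f x → f' x (y - x) ≤ 0 :=
  stmt_12_general f f' hdiff hssq
end
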